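/- For every n ≥ 2, let G_n be the presented group on generators X_1, β_1, …, β_{n−1} subject to: β_iβ_{i+1}β_i = β_{i+1}β_iβ_{i+1}; β_iβ_j = β_jβ_i for |i−j| ≥ 2; β_1X_1β_1⁻¹ = X_1⁻¹β_1⁻¹X_1β_1X_1; and β_iX_1β_i⁻¹ = X_1 for i ≠ 1. Then the homomorphism G_n → Br_n^1 determined by X_1 ↦ X_1 and β_i ↦ β_i is a group isomorphism. -/
import Mathlib


/-- The Artin braid relations on `N` generators `β_0, …, β_{N-1}`, recorded as relators:
`β_iβ_{i+1}β_i = β_{i+1}β_iβ_{i+1}` and `β_iβ_j = β_jβ_i` for `|i-j| ≥ 2`. -/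
def braidRels (N : ℕ) : Set (FreeGroup (Fin N)) :=
  { r | (∃ i j : Fin N, (i : ℕ) + 1 = (j : ℕ) ∧
          r = FreeGroup.of i * FreeGroup.of j * FreeGroup.of i *
              (FreeGroup.of j * FreeGroup.of i * FreeGroup.of j)⁻¹) ∨
        (∃ i j : Fin N, (i : ℕ) + 2 ≤ (j : ℕ) ∧
          r = FreeGroup.of i * FreeGroup.of j * (FreeGroup.of j * FreeGroup.of i)⁻¹) }

/-- The braid group on `N+1` strands, presented on the `N` generators `β_0, …, β_{N-1}`
subject to the Artin relations. -/
abbrev Braid (N : ℕ) : Type := PresentedGroup (braidRels N)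

/-- Generators of the braid group with a frozen strand `Br^1_{m+1}`:
`X i` (for `i : Fin (m+1)`) is the generator `X_{i+1}`, and `beta i` (for `i : Fin m`) is the
generator `β_{i+1}` (so the 1-based labels are `X_1, …, X_{m+1}` and `β_1, …, β_m`). -/
inductive FGen (m : ℕ) : Type
  | X : Fin (m + 1) → FGen m
  | beta : Fin m → FGen m

/-- The generator `X_{i+1}` as an element of the free group. -/
def Y {m : ℕ} (i : Fin (m + 1)) : FreeGroup (FGen m) := FreeGroup.of (FGen.X i)

/-- The generator `β_{i+1}` as an element of the free group. -/
def B {m : ℕ} (i : Fin m) : FreeGroup (FGen m) := FreeGroup.of (FGen.beta i)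

/-- The defining relators of the braid group with a frozen strand `Br^1_{m+1}`:
the braid relations among the `β`'s together with
`β_iX_iβ_i⁻¹ = X_{i+1}`, `β_iX_{i+1}β_i⁻¹ = X_{i+1}⁻¹X_iX_{i+1}` and `β_iX_jβ_i⁻¹ = X_j`
for `j ≠ i, i+1`. -/
def frozenRels (m : ℕ) : Set (FreeGroup (FGen m)) :=
  { r | (∃ i j : Fin m, (i : ℕ) + 1 = (j : ℕ) ∧
          r = B i * B j * B i * (B j * B i * B j)⁻¹) ∨
        (∃ i j : Fin m, (i : ℕ) + 2 ≤ (j : ℕ) ∧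
          r = B i * B j * (B j * B i)⁻¹) ∨
        (∃ i : Fin m, r = B i * Y i.castSucc * (B i)⁻¹ * (Y i.succ)⁻¹) ∨
        (∃ i : Fin m,
          r = B i * Y i.succ * (B i)⁻¹ * ((Y i.succ)⁻¹ * Y i.castSucc * Y i.succ)⁻¹) ∨
        (∃ (i : Fin m) (j : Fin (m + 1)), (j : ℕ) ≠ (i : ℕ) ∧ (j : ℕ) ≠ (i : ℕ) + 1 ∧
          r = B i * Y j * (B i)⁻¹ * (Y j)⁻¹) }

/-- The braid group with a frozen strand `Br^1_{m+1}` (so `Br^1_n` with `n = m+1 ≥ 1`). -/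
abbrev BrFrozen (m : ℕ) : Type := PresentedGroup (frozenRels m)

/-- Generators of the alternative presentation `G_n` (with `n = m+1`): a single generator
`X` (the generator `X_1`) together with `beta i` (for `i : Fin m`), the generator `β_{i+1}`. -/
inductive AGen (m : ℕ) : Type
  | X : AGen m
  | beta : Fin m → AGen m

/-- The generator `X_1` as an element of the free group. -/
def AY {m : ℕ} : FreeGroup (AGen m) := FreeGroup.of AGen.X

/-- The generator `β_{i+1}` as an element of the free group. -/
def AB {m : ℕ} (i : Fin m) : FreeGroup (AGen m) := FreeGroup.of (AGen.beta i)

/-- The defining relators of `G_n` (with `n = m+1`): the braid relations among the `β`'s,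
`β₁X₁β₁⁻¹ = X₁⁻¹β₁⁻¹X₁β₁X₁`, and `β_iX₁β_i⁻¹ = X₁` for `i ≠ 1`. -/
def altRels (m : ℕ) : Set (FreeGroup (AGen m)) :=
  { r | (∃ i j : Fin m, (i : ℕ) + 1 = (j : ℕ) ∧
          r = AB i * AB j * AB i * (AB j * AB i * AB j)⁻¹) ∨
        (∃ i j : Fin m, (i : ℕ) + 2 ≤ (j : ℕ) ∧
          r = AB i * AB j * (AB j * AB i)⁻¹) ∨
        (∃ i : Fin m, (i : ℕ) = 0 ∧
          r = AB i * AY * (AB i)⁻¹ * (AY⁻¹ * (AB i)⁻¹ * AY * AB i * AY)⁻¹) ∨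
        (∃ i : Fin m, (i : ℕ) ≠ 0 ∧ r = AB i * AY * (AB i)⁻¹ * AY⁻¹) }

/-- The group `G_n` presented on the generators `X_1, β_1, …, β_{n-1}` (with `n = m+1`). -/
abbrev AltG (m : ℕ) : Type := PresentedGroup (altRels m)

namespace FrozenProof

section Helpers
variable {G : Type*} [Group G]

lemma semiconj_conj {w u v s t : G} (h1 : w*u = v*w) (h2 : u*s = t*u) :
    v*(w*s*w⁻¹) = (w*t*w⁻¹)*v := by
  have hv : v = w*u*w⁻¹ := by rw [h1]; group
  calc v*(w*s*w⁻¹) = w*(u*s)*w⁻¹ := by rw [hv]; group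
    _ = w*(t*u)*w⁻¹ := by rw [h2]
    _ = (w*t*w⁻¹)*v := by rw [hv]; group

lemma rel0_to_S {b x : G} (h : b*x*b⁻¹ = x⁻¹*b⁻¹*(x*b*x)) : b*x*(b*x) = x*b*(x*b) := by
  calc b*x*(b*x) = (b*x)*(b*x*b⁻¹)*b := by group
    _ = (b*x)*(x⁻¹*b⁻¹*(x*b*x))*b := by rw [h]
    _ = x*b*(x*b) := by group

lemma S_to_rel4 {b x : G} (h : b*x*(b*x) = x*b*(x*b)) :
    b*(b*x*b⁻¹)*b⁻¹*((b*x*b⁻¹)⁻¹*x*(b*x*b⁻¹))⁻¹ = 1 := by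
  rw [mul_inv_eq_one]
  have key : b*x⁻¹*b⁻¹*(x*b*(x*b)) = b*(b*x) := by rw [← h]; group
  calc b*(b*x*b⁻¹)*b⁻¹ = b*(b*x)*b⁻¹*b⁻¹ := by group
    _ = b*x⁻¹*b⁻¹*(x*b*(x*b))*b⁻¹*b⁻¹ := by rw [key]
    _ = (b*x*b⁻¹)⁻¹*x*(b*x*b⁻¹) := by group

lemma S_step {b b' x x' z : G} (hz : z = b*b') (hx' : x' = b*x*b⁻¹)
    (hbr : b*b'*b = b'*b*b') (hcomm : b'*x = x*b')
    (hS : b*x*(b*x) = x*b*(x*b)) : b'*x'*(b'*x') = x'*b'*(x'*b') := by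
  have f1 : SemiconjBy z b b' := by
    show z*b = b'*z
    rw [hz, ← mul_assoc]; exact hbr
  have f2 : SemiconjBy z x x' := by
    show z*x = x'*z
    rw [hz, hx', mul_assoc, hcomm]; group
  have g1 := (f1.mul_right f2).mul_right (f1.mul_right f2)
  have g2 := (f2.mul_right f1).mul_right (f2.mul_right f1)
  have hc : b'*x'*(b'*x')*z = x'*b'*(x'*b')*z := by
    rw [← g1.eq, ← g2.eq, hS]
  exact mul_right_cancel hc

end Helpers

lemma relOne {α : Type*} {rels : Set (FreeGroup α)} {r : FreeGroup α} (h : r ∈ rels) :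
    PresentedGroup.mk rels r = 1 :=
  (QuotientGroup.eq_one_iff r).mpr (Subgroup.subset_normalClosure h)

@[simp] lemma mk_of {α : Type*} {rels : Set (FreeGroup α)} (x : α) :
    PresentedGroup.mk rels (FreeGroup.of x) = PresentedGroup.of x := rfl

variable {m : ℕ}

/-- `β_{i+1}` in `AltG m`. -/
abbrev bA (i : Fin m) : AltG m := PresentedGroup.of (AGen.beta i)
/-- `X_1` in `AltG m`. -/
abbrev aA : AltG m := PresentedGroup.of (AGen.X (m := m))

lemma abr1 {i j : Fin m} (h : (i:ℕ)+1 = j) : bA i * bA j * bA i = bA j * bA i * bA j := by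
  have H := relOne (rels := altRels m) (Or.inl ⟨i, j, h, rfl⟩)
  simp only [AB, map_mul, map_inv, mk_of, mul_inv_eq_one] at H
  exact H

lemma abr2 {i j : Fin m} (h : (i:ℕ)+2 ≤ j) : bA i * bA j = bA j * bA i := by
  have H := relOne (rels := altRels m) (Or.inr (Or.inl ⟨i, j, h, rfl⟩))
  simp only [AB, map_mul, map_inv, mk_of, mul_inv_eq_one] at H
  exact H

lemma arel0 {i : Fin m} (h : (i:ℕ) = 0) :
    bA i * aA * (bA i)⁻¹ = aA⁻¹ * (bA i)⁻¹ * aA * bA i * aA := by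
  have H := relOne (rels := altRels m) (Or.inr (Or.inr (Or.inl ⟨i, h, rfl⟩)))
  simp only [AB, AY, map_mul, map_inv, mk_of, mul_inv_eq_one] at H
  exact H

lemma arel1 {i : Fin m} (h : (i:ℕ) ≠ 0) : bA i * aA = aA * bA i := by
  have H := relOne (rels := altRels m) (Or.inr (Or.inr (Or.inr ⟨i, h, rfl⟩)))
  simp only [AB, AY, map_mul, map_inv, mk_of, mul_inv_eq_one] at H
  calc bA i * aA = (bA i * aA * (bA i)⁻¹) * bA i := by group
    _ = aA * bA i := by rw [H]

/-- The element `X_{j+1}` of `AltG m`, as a conjugate of `X_1`. -/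
def xs (m : ℕ) : ℕ → AltG m
  | 0 => aA
  | j+1 =>
    if h : j < m then bA ⟨j, h⟩ * xs m j * (bA ⟨j, h⟩)⁻¹ else 1

lemma xs_succ {j : ℕ} (h : j < m) : xs m (j+1) = bA ⟨j, h⟩ * xs m j * (bA ⟨j, h⟩)⁻¹ := by
  simp only [xs, dif_pos h]

lemma xs_zero : xs m 0 = aA := rfl

end FrozenProof

namespace FrozenProof
variable {m : ℕ}

lemma commL (i : Fin m) : ∀ j : ℕ, j < (i:ℕ) → bA i * xs m j = xs m j * bA i := by
  intro j
  induction j with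
  | zero => intro hj; rw [xs_zero]; exact arel1 (by omega)
  | succ j ih =>
    intro hj
    have hjm : j < m := lt_trans (by omega) i.isLt
    have c1 : Commute (bA i) (bA ⟨j, hjm⟩) :=
      (abr2 (i := ⟨j, hjm⟩) (j := i) (show j+2 ≤ (i:ℕ) by omega)).symm
    have c2 : Commute (bA i) (xs m j) := ih (by omega)
    rw [xs_succ hjm]
    exact (c1.mul_right c2).mul_right c1.inv_right

lemma commR (i : Fin m) : ∀ j : ℕ, (i:ℕ)+2 ≤ j → j ≤ m → bA i * xs m j = xs m j * bA i := by
  intro j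
  induction j with
  | zero => intro h _; omega
  | succ j ih =>
    intro h hjm1
    have hjm : j < m := hjm1
    by_cases hcase : (i:ℕ)+2 ≤ j
    · have c1 : Commute (bA i) (bA ⟨j, hjm⟩) :=
        abr2 (i := i) (j := ⟨j, hjm⟩) (show (i:ℕ)+2 ≤ j from hcase)
      have c2 : Commute (bA i) (xs m j) := ih hcase (by omega)
      rw [xs_succ hjm]
      exact (c1.mul_right c2).mul_right c1.inv_right
    · have hj1 : j = (i:ℕ)+1 := by omega
      subst hj1
      rw [xs_succ hjm, xs_succ (show (i:ℕ) < m from i.isLt)]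
      simp only [Fin.eta]
      set b' : AltG m := bA ⟨(i:ℕ)+1, hjm⟩ with hb'
      set x : AltG m := xs m (i:ℕ) with hx
      have h1 : (b' * bA i) * b' = bA i * (b' * bA i) := by
        rw [← mul_assoc]
        exact (abr1 (i := i) (j := ⟨(i:ℕ)+1, hjm⟩) rfl).symm
      have h2 : b' * x = x * b' := commL ⟨(i:ℕ)+1, hjm⟩ (i:ℕ) (Nat.lt_succ_self _)
      have key := semiconj_conj h1 h2
      have hEq : b' * (bA i * x * (bA i)⁻¹) * b'⁻¹ = (b' * bA i) * x * (b' * bA i)⁻¹ := by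
        group
      rw [hEq]
      exact key

lemma S_all : ∀ (i : ℕ) (hi : i < m),
    bA ⟨i,hi⟩ * xs m i * (bA ⟨i,hi⟩ * xs m i) = xs m i * bA ⟨i,hi⟩ * (xs m i * bA ⟨i,hi⟩) := by
  intro i
  induction i with
  | zero =>
    intro hi
    rw [xs_zero]
    refine rel0_to_S ?_
    have h0 := arel0 (i := ⟨0, hi⟩) rfl
    rw [h0]; group
  | succ i ih =>
    intro hi
    have hi' : i < m := by omega
    refine S_step (z := bA ⟨i,hi'⟩ * bA ⟨i+1,hi⟩) rfl (xs_succ hi') ?_ ?_ (ih hi')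
    · exact abr1 (i := ⟨i,hi'⟩) (j := ⟨i+1,hi⟩) rfl
    · exact commL ⟨i+1,hi⟩ i (Nat.lt_succ_self _)

end FrozenProof

namespace FrozenProof
variable {m : ℕ}

/-- `β_{i+1}` in `BrFrozen m`. -/
abbrev bF (i : Fin m) : BrFrozen m := PresentedGroup.of (FGen.beta i)
/-- `X_{j+1}` in `BrFrozen m`. -/
abbrev yF (j : Fin (m+1)) : BrFrozen m := PresentedGroup.of (FGen.X j)

lemma fbr1 {i j : Fin m} (h : (i:ℕ)+1 = j) : bF i * bF j * bF i = bF j * bF i * bF j := by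
  have H := relOne (rels := frozenRels m) (Or.inl ⟨i, j, h, rfl⟩)
  simp only [B, map_mul, map_inv, mk_of, mul_inv_eq_one] at H
  exact H

lemma fbr2 {i j : Fin m} (h : (i:ℕ)+2 ≤ j) : bF i * bF j = bF j * bF i := by
  have H := relOne (rels := frozenRels m) (Or.inr (Or.inl ⟨i, j, h, rfl⟩))
  simp only [B, map_mul, map_inv, mk_of, mul_inv_eq_one] at H
  exact H

lemma fr3 (i : Fin m) : bF i * yF i.castSucc * (bF i)⁻¹ = yF i.succ := by
  have H := relOne (rels := frozenRels m) (Or.inr (Or.inr (Or.inl ⟨i, rfl⟩)))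
  simp only [B, Y, map_mul, map_inv, mk_of, mul_inv_eq_one] at H
  exact H

lemma fr4 (i : Fin m) :
    bF i * yF i.succ * (bF i)⁻¹ = (yF i.succ)⁻¹ * yF i.castSucc * yF i.succ := by
  have H := relOne (rels := frozenRels m) (Or.inr (Or.inr (Or.inr (Or.inl ⟨i, rfl⟩))))
  simp only [B, Y, map_mul, map_inv, mk_of, mul_inv_eq_one] at H
  exact H

lemma fr5 (i : Fin m) (j : Fin (m+1)) (h1 : (j:ℕ) ≠ (i:ℕ)) (h2 : (j:ℕ) ≠ (i:ℕ)+1) :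
    bF i * yF j * (bF i)⁻¹ = yF j := by
  have H := relOne (rels := frozenRels m) (Or.inr (Or.inr (Or.inr (Or.inr ⟨i, j, h1, h2, rfl⟩))))
  simp only [B, Y, map_mul, map_inv, mk_of, mul_inv_eq_one] at H
  exact H

/-- The map on generators defining `φ : AltG m → BrFrozen m`. -/
def fA (m : ℕ) : AGen m → BrFrozen m
  | .X => yF 0
  | .beta i => bF i

@[simp] lemma fA_X : fA m AGen.X = yF 0 := rfl
@[simp] lemma fA_beta (i : Fin m) : fA m (AGen.beta i) = bF i := rfl

/-- The map on generators defining `ψ : BrFrozen m → AltG m`. -/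
def gF (m : ℕ) : FGen m → AltG m
  | .X j => xs m (j:ℕ)
  | .beta i => bA i

@[simp] lemma gF_X (j : Fin (m+1)) : gF m (FGen.X j) = xs m (j:ℕ) := rfl
@[simp] lemma gF_beta (i : Fin m) : gF m (FGen.beta i) = bA i := rfl

lemma hf (m : ℕ) : ∀ r ∈ altRels m, FreeGroup.lift (fA m) r = 1 := by
  rintro r (⟨i, j, hij, rfl⟩ | ⟨i, j, hij, rfl⟩ | ⟨i, hi, rfl⟩ | ⟨i, hi, rfl⟩)
  · simp only [AB, map_mul, map_inv, FreeGroup.lift_apply_of, fA_beta, mul_inv_eq_one]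
    exact fbr1 hij
  · simp only [AB, map_mul, map_inv, FreeGroup.lift_apply_of, fA_beta, mul_inv_eq_one]
    exact fbr2 hij
  · simp only [AB, AY, map_mul, map_inv, FreeGroup.lift_apply_of, fA_beta, fA_X]
    have hcast : i.castSucc = (0 : Fin (m+1)) := by ext; simpa using hi
    have h3 := fr3 i; rw [hcast] at h3
    have h4 := fr4 i; rw [hcast] at h4
    have hp : (bF i)⁻¹ * yF i.succ * bF i = yF 0 := by rw [← h3]; group
    have hpp : yF 0 = yF i.succ * (bF i * yF i.succ * (bF i)⁻¹) * (yF i.succ)⁻¹ := by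
      rw [h4]; group
    have h5 : (bF i)⁻¹ * yF 0 * bF i = yF 0 * yF i.succ * (yF 0)⁻¹ := by
      calc (bF i)⁻¹ * yF 0 * bF i
          = ((bF i)⁻¹ * yF i.succ * bF i) * yF i.succ * ((bF i)⁻¹ * yF i.succ * bF i)⁻¹ := by
            rw [hpp]; group
        _ = yF 0 * yF i.succ * (yF 0)⁻¹ := by rw [hp]
    rw [mul_inv_eq_one]
    calc bF i * yF 0 * (bF i)⁻¹ = yF i.succ := h3
      _ = (yF 0)⁻¹ * (yF 0 * yF i.succ * (yF 0)⁻¹) * yF 0 := by group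
      _ = (yF 0)⁻¹ * ((bF i)⁻¹ * yF 0 * bF i) * yF 0 := by rw [h5]
      _ = (yF 0)⁻¹ * (bF i)⁻¹ * yF 0 * bF i * yF 0 := by group
  · simp only [AB, AY, map_mul, map_inv, FreeGroup.lift_apply_of, fA_beta, fA_X]
    have h1 : ((0 : Fin (m+1)):ℕ) ≠ (i:ℕ) := by
      simp only [Fin.val_zero]; omega
    have h2 : ((0 : Fin (m+1)):ℕ) ≠ (i:ℕ)+1 := by
      simp only [Fin.val_zero]; omega
    rw [fr5 i 0 h1 h2]; group

lemma hg (m : ℕ) : ∀ r ∈ frozenRels m, FreeGroup.lift (gF m) r = 1 := by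
  rintro r (⟨i, j, hij, rfl⟩ | ⟨i, j, hij, rfl⟩ | ⟨i, rfl⟩ | ⟨i, rfl⟩ | ⟨i, j, hj1, hj2, rfl⟩)
  · simp only [B, map_mul, map_inv, FreeGroup.lift_apply_of, gF_beta, mul_inv_eq_one]
    exact abr1 hij
  · simp only [B, map_mul, map_inv, FreeGroup.lift_apply_of, gF_beta, mul_inv_eq_one]
    exact abr2 hij
  · simp only [B, Y, map_mul, map_inv, FreeGroup.lift_apply_of, gF_beta, gF_X,
      Fin.coe_castSucc, Fin.val_succ]
    rw [xs_succ i.isLt]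
    simp only [Fin.eta]
    group
  · simp only [B, Y, map_mul, map_inv, FreeGroup.lift_apply_of, gF_beta, gF_X,
      Fin.coe_castSucc, Fin.val_succ]
    rw [xs_succ i.isLt]
    simp only [Fin.eta]
    exact S_to_rel4 (S_all (i:ℕ) i.isLt)
  · simp only [B, Y, map_mul, map_inv, FreeGroup.lift_apply_of, gF_beta, gF_X]
    have hcomm : bA i * xs m (j:ℕ) = xs m (j:ℕ) * bA i := by
      rcases Nat.lt_or_ge (j:ℕ) (i:ℕ) with h | h
      · exact commL i (j:ℕ) h
      · exact commR i (j:ℕ) (by omega) (by omega)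
    rw [hcomm]; group

end FrozenProof

namespace FrozenProof
variable {m : ℕ}

/-- The homomorphism `φ : AltG m → BrFrozen m`. -/
def phi (m : ℕ) : AltG m →* BrFrozen m := PresentedGroup.toGroup (hf m)

/-- The homomorphism `ψ : BrFrozen m → AltG m`. -/
def psi (m : ℕ) : BrFrozen m →* AltG m := PresentedGroup.toGroup (hg m)

@[simp] lemma phi_of (x : AGen m) : phi m (PresentedGroup.of x) = fA m x :=
  PresentedGroup.toGroup.of _

@[simp] lemma psi_of (x : FGen m) : psi m (PresentedGroup.of x) = gF m x :=
  PresentedGroup.toGroup.of _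

lemma phi_xs : ∀ (j : ℕ) (hj : j < m+1), phi m (xs m j) = yF ⟨j, hj⟩ := by
  intro j
  induction j with
  | zero =>
    intro hj
    rw [xs_zero]
    show phi m (PresentedGroup.of AGen.X) = yF ⟨0, hj⟩
    rw [phi_of, fA_X]
    rfl
  | succ j ih =>
    intro hj
    have hjm : j < m := by omega
    rw [xs_succ hjm, map_mul, map_mul, map_inv, ih (by omega)]
    show bF ⟨j, hjm⟩ * yF ⟨j, _⟩ * (bF ⟨j, hjm⟩)⁻¹ = yF ⟨j+1, hj⟩
    have e1 : (⟨j, hjm⟩ : Fin m).castSucc = ⟨j, by omega⟩ := by ext; simp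
    have e2 : (⟨j, hjm⟩ : Fin m).succ = ⟨j+1, hj⟩ := by ext; simp
    have H := fr3 (⟨j, hjm⟩ : Fin m)
    rw [e1, e2] at H
    exact H

lemma psi_phi : (psi m).comp (phi m) = MonoidHom.id (AltG m) := by
  apply PresentedGroup.ext
  intro x
  cases x with
  | X => simp [xs_zero]
  | beta i => simp

lemma phi_psi : (phi m).comp (psi m) = MonoidHom.id (BrFrozen m) := by
  apply PresentedGroup.ext
  intro x
  cases x with
  | X j =>
    show phi m (psi m (PresentedGroup.of (FGen.X j))) = PresentedGroup.of (FGen.X j)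
    rw [psi_of, gF_X, phi_xs (j:ℕ) j.isLt]
  | beta i => simp

end FrozenProof

open FrozenProof in
theorem altPresentation_iso (m : ℕ) (hm : 1 ≤ m) :
    ∃ φ : AltG m →* BrFrozen m,
      (φ (PresentedGroup.of AGen.X) = PresentedGroup.of (FGen.X (0 : Fin (m + 1)))) ∧
      (∀ i : Fin m,
        φ (PresentedGroup.of (AGen.beta i)) = PresentedGroup.of (FGen.beta i)) ∧
      Function.Bijective φ := by
  refine ⟨phi m, by simp, fun i => by simp, ?_, ?_⟩
  · intro a b hab
    have := DFunLike.congr_fun (psi_phi (m := m))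
    calc a = psi m (phi m a) := (this a).symm
      _ = psi m (phi m b) := by rw [hab]
      _ = b := this b
  · intro y
    exact ⟨psi m y, DFunLike.congr_fun (phi_psi (m := m)) y⟩
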